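/- Let R be a quasi-Frobenius ring and let f : M → N be an R-linear map that is a stable equivalence. Then there exist projective R-modules P and Q and an R-module isomorphism φ : M × P ≅ N × Q such that f equals the composition of the canonical inclusion M → M × P, followed by φ, followed by the canonical projection N × Q → N. -/

import Mathlib

/-- An `R`-linear map factors through a projective `R`-module. -/
def FactorsThroughProjective (R : Type) [Ring R] {M N : Type} [AddCommGroup M] [Module R M]
    [AddCommGroup N] [Module R N] (f : M →ₗ[R] N) : Prop :=
  ∃ (P : Type) (_ : AddCommGroup P) (_ : Module R P) (_ : Module.Projective R P)
    (a : M →ₗ[R] P) (b : P →ₗ[R] N), b ∘ₗ a = f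

/-- An `R`-linear map is a stable equivalence if it becomes an isomorphism in the stable
module category: there is `g` in the other direction such that `g ∘ f - id` and `f ∘ g - id`
each factor through a projective module. -/
def IsStableEquiv (R : Type) [Ring R] {M N : Type} [AddCommGroup M] [Module R M]
    [AddCommGroup N] [Module R N] (f : M →ₗ[R] N) : Prop :=
  ∃ g : N →ₗ[R] M,
    FactorsThroughProjective R (g ∘ₗ f - LinearMap.id) ∧
    FactorsThroughProjective R (f ∘ₗ g - LinearMap.id)

/-- A quasi-Frobenius ring: left and right Noetherian, and injective over itself
as a left and as a right module. -/
class IsQuasiFrobenius (R : Type) [Ring R] : Prop where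
  noetherian_left : IsNoetherianRing R
  noetherian_right : IsNoetherianRing Rᵐᵒᵖ
  selfInjective_left : Module.Injective R R
  selfInjective_right : Module.Injective Rᵐᵒᵖ Rᵐᵒᵖ

/-!
Write `g ∘ f - id = b ∘ a` with `a : M → P`, `b : P → M` and `P` projective. The map
`F = (f, a) : M → N × P` has the left inverse `r = g ∘ fst - b ∘ snd`, so `N × P ≅ M × C` with
`C` the cokernel of `F`. Modulo maps factoring through projectives, `F ∘ r ≡ inl ∘ f ∘ g ∘ fst`
and `f ∘ g ≡ id`, so the idempotent `id - F ∘ r` factors through a projective; hence so does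
`id_C`, and `C`, a retract of a projective module, is projective.
-/

namespace FactorsThroughProjective

variable {R : Type} [Ring R] {M N K : Type} [AddCommGroup M] [Module R M]
  [AddCommGroup N] [Module R N] [AddCommGroup K] [Module R K]

theorem comp_left (h : N →ₗ[R] K) {f : M →ₗ[R] N} (hf : FactorsThroughProjective R f) :
    FactorsThroughProjective R (h ∘ₗ f) := by
  obtain ⟨P, _, _, _, a, b, rfl⟩ := hf
  exact ⟨P, _, _, ‹_›, a, h ∘ₗ b, rfl⟩

theorem comp_right (h : K →ₗ[R] M) {f : M →ₗ[R] N} (hf : FactorsThroughProjective R f) :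
    FactorsThroughProjective R (f ∘ₗ h) := by
  obtain ⟨P, _, _, _, a, b, rfl⟩ := hf
  exact ⟨P, _, _, ‹_›, a ∘ₗ h, b, rfl⟩

theorem add {f g : M →ₗ[R] N} (hf : FactorsThroughProjective R f)
    (hg : FactorsThroughProjective R g) : FactorsThroughProjective R (f + g) := by
  obtain ⟨P, _, _, _, a, b, rfl⟩ := hf
  obtain ⟨P', _, _, _, a', b', rfl⟩ := hg
  exact ⟨P × P', _, _, inferInstance, a.prod a', b.coprod b', by ext; simp⟩

theorem sub {f g : M →ₗ[R] N} (hf : FactorsThroughProjective R f)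
    (hg : FactorsThroughProjective R g) : FactorsThroughProjective R (f - g) := by
  obtain ⟨P, _, _, _, a, b, rfl⟩ := hf
  obtain ⟨P', _, _, _, a', b', rfl⟩ := hg
  exact ⟨P × P', _, _, inferInstance, a.prod a', b.coprod (-b'), by ext; simp [sub_eq_add_neg]⟩

theorem of_projective_codomain [Module.Projective R N] (f : M →ₗ[R] N) :
    FactorsThroughProjective R f :=
  ⟨N, _, _, ‹_›, f, LinearMap.id, rfl⟩

end FactorsThroughProjective

section

variable {R : Type} [Ring R] {M N X : Type} [AddCommGroup M] [Module R M]
  [AddCommGroup N] [Module R N] [AddCommGroup X] [Module R X]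

open LinearMap (fst snd inl inr comp_sub zero_comp)

theorem Module.Projective.of_factorsThroughProjective_id
    (h : FactorsThroughProjective R (LinearMap.id : M →ₗ[R] M)) : Module.Projective R M := by
  obtain ⟨P, _, _, _, a, b, hab⟩ := h
  exact .of_split a b hab

theorem exists_projective_complement_of_leftInverse {F : M →ₗ[R] X} {r : X →ₗ[R] M}
    (hrF : r ∘ₗ F = LinearMap.id)
    (hFr : FactorsThroughProjective R (LinearMap.id - F ∘ₗ r)) :
    ∃ (C : Type) (_ : AddCommGroup C) (_ : Module R C) (_ : Module.Projective R C)
      (φ : (M × C) ≃ₗ[R] X), (φ : M × C →ₗ[R] X) ∘ₗ inl R M C = F := by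
  obtain ⟨e, hF, hπ⟩ := (LinearMap.exact_map_mkQ_range F).splitInjectiveEquiv
    (Submodule.mkQ_surjective _) ⟨r, hrF⟩
  refine ⟨X ⧸ LinearMap.range F, _, _, .of_factorsThroughProjective_id ?_, e.symm, hF.symm⟩
  set π := (LinearMap.range F).mkQ
  have hπF : π ∘ₗ F = 0 := by ext; simp [π]
  -- `π` kills `F`, and `e.symm ∘ inr` is a section of `π`.
  have hid : LinearMap.id =
      (π ∘ₗ (LinearMap.id - F ∘ₗ r)) ∘ₗ ((e.symm : M × _ →ₗ[R] X) ∘ₗ inr R M _) := by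
    rw [comp_sub, ← LinearMap.comp_assoc r F, hπF, zero_comp, sub_zero, LinearMap.comp_id, hπ]
    ext; simp
  rw [hid]
  exact (hFr.comp_left _).comp_right _

theorem factorsThroughProjective_id_sub_prod_comp {P : Type} [AddCommGroup P] [Module R P]
    [Module.Projective R P] {f : M →ₗ[R] N} {g : N →ₗ[R] M} (a : M →ₗ[R] P) (b : P →ₗ[R] M)
    (hfg : FactorsThroughProjective R (f ∘ₗ g - LinearMap.id)) :
    FactorsThroughProjective R
      (LinearMap.id - f.prod a ∘ₗ (g ∘ₗ fst R N P - b ∘ₗ snd R N P)) := by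
  set r := g ∘ₗ fst R N P - b ∘ₗ snd R N P
  have hsplit : LinearMap.id - f.prod a ∘ₗ r =
      (inl R N P ∘ₗ f ∘ₗ b + inr R N P) ∘ₗ snd R N P -
        (inl R N P ∘ₗ (f ∘ₗ g - LinearMap.id) ∘ₗ fst R N P + inr R N P ∘ₗ a ∘ₗ r) := by
    ext <;> simp [r]
  rw [hsplit]
  exact ((FactorsThroughProjective.of_projective_codomain _).comp_left _).sub
    (((hfg.comp_right _).comp_left _).add
      ((FactorsThroughProjective.of_projective_codomain _).comp_left _))

end

theorem stableEquiv_iso_up_to_projectives_general (R : Type) [Ring R]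
    {M N : Type} [AddCommGroup M] [Module R M] [AddCommGroup N] [Module R N]
    (f : M →ₗ[R] N) (hse : IsStableEquiv R f) :
    ∃ (P Q : Type) (_ : AddCommGroup P) (_ : Module R P) (_ : AddCommGroup Q) (_ : Module R Q)
      (_ : Module.Projective R P) (_ : Module.Projective R Q)
      (φ : (M × P) ≃ₗ[R] (N × Q)),
      (LinearMap.fst R N Q) ∘ₗ (φ : M × P →ₗ[R] N × Q) ∘ₗ (LinearMap.inl R M P) = f := by
  obtain ⟨g, ⟨Q, _, _, _, a, b, hab⟩, hfg⟩ := hse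
  have hrF : (g ∘ₗ LinearMap.fst R N Q - b ∘ₗ LinearMap.snd R N Q) ∘ₗ f.prod a =
      LinearMap.id := by
    rw [LinearMap.sub_comp, LinearMap.comp_assoc, LinearMap.comp_assoc, LinearMap.fst_prod,
      LinearMap.snd_prod, hab, sub_sub_cancel]
  obtain ⟨P, _, _, _, φ, hφ⟩ := exists_projective_complement_of_leftInverse hrF
    (factorsThroughProjective_id_sub_prod_comp a b hfg)
  exact ⟨P, Q, _, _, _, _, ‹_›, ‹_›, φ, by rw [hφ, LinearMap.fst_prod]⟩

/-- Over a quasi-Frobenius ring, every stable equivalence `f : M → N` is, up to adding projective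
direct summands, an isomorphism: `f` factors as the inclusion `M → M × P`, followed by an
isomorphism `M × P ≅ N × Q`, followed by the projection `N × Q → N`, with `P`, `Q` projective. -/
theorem stableEquiv_iso_up_to_projectives (R : Type) [Ring R] [IsQuasiFrobenius R]
    {M N : Type} [AddCommGroup M] [Module R M] [AddCommGroup N] [Module R N]
    (f : M →ₗ[R] N) (hse : IsStableEquiv R f) :
    ∃ (P Q : Type) (_ : AddCommGroup P) (_ : Module R P) (_ : AddCommGroup Q) (_ : Module R Q)
      (_ : Module.Projective R P) (_ : Module.Projective R Q)
      (φ : (M × P) ≃ₗ[R] (N × Q)),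
      (LinearMap.fst R N Q) ∘ₗ (φ : M × P →ₗ[R] N × Q) ∘ₗ (LinearMap.inl R M P) = f :=
  stableEquiv_iso_up_to_projectives_general R f hse
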